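/- For single-buffer simulation with unbounded buffer: if 𝒜 ⊑ω ℬ (Duplicator wins the buffered simulation game with an unbounded FIFO buffer) then L(𝒜) ⊆ L(ℬ) for Büchi automata 𝒜 and ℬ. -/

import Mathlib

open scoped Classical

/-- A Büchi automaton over alphabet `S`. -/
structure BA (S : Type) where
  Q : Type
  init : Q
  trans : Q → S → Q → Prop
  acc : Q → Prop

/-- The Büchi language of `A`: infinite words with a run from the initial state
visiting accepting states infinitely often. -/
def BA.Lang {S : Type} (A : BA S) : Set (ℕ → S) :=
  { w | ∃ ρ : ℕ → A.Q, ρ 0 = A.init ∧ (∀ n, A.trans (ρ n) (w n) (ρ (n+1))) ∧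
        ∀ n, ∃ m, n ≤ m ∧ A.acc (ρ m) }

/-- Single-buffer game: the configuration after Spoiler's move `(a, q')`:
 `a` is appended to the buffer. -/
def midCfg1 {S : Type} {QA QB : Type} (c : QA × List S × QB) (m : S × QA) :
    QA × List S × QB :=
  (m.2, c.2.1 ++ [m.1], c.2.2)

/-- Duplicator's move in the single-buffer game: skip (`none`) or consume the oldest
buffered letter along a matching transition to state `p'` (`some p'`). -/
noncomputable def dupApply1 {S : Type} (A B : BA S) :
    (A.Q × List S × B.Q) → Option B.Q → Option (A.Q × List S × B.Q)
  | c, none => some c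
  | c, some p' =>
    match c.2.1 with
    | [] => none
    | b :: γ => if B.trans c.2.2 b p' then some (c.1, γ, p') else none

/-- The configuration at the start of round `n` of the single-buffer game. -/
noncomputable def playCfg1 {S : Type} (A B : BA S)
    (sp : ℕ → S × A.Q) (dm : ℕ → Option B.Q) : ℕ → Option (A.Q × List S × B.Q)
  | 0 => some (A.init, [], B.init)
  | n+1 =>
    match playCfg1 A B sp dm n with
    | none => none
    | some c =>
      if A.trans c.1 (sp n).1 (sp n).2 then dupApply1 A B (midCfg1 c (sp n)) (dm n) else none

/-- Duplicator's winning condition for the single-buffer game with capacity `k`: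
the buffer never exceeds `k` (checked after her moves), and either Spoiler's run is
non-accepting, or Duplicator moves infinitely often and her run visits accepting
states infinitely often. -/
def Win1 {S : Type} (A B : BA S) (k : ℕ∞)
    (sp : ℕ → S × A.Q) (dm : ℕ → Option B.Q) : Prop :=
  (∀ n c, playCfg1 A B sp dm n = some c → (c.2.1.length : ℕ∞) ≤ k) ∧
  ((∃ N, ∀ n, N ≤ n → ¬ A.acc (sp n).2) ∨
    ((∀ n, ∃ m, n ≤ m ∧ dm m ≠ none) ∧ (∀ n, ∃ m, n ≤ m ∧ ∃ p ∈ dm m, B.acc p)))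

/-- Single-buffer simulation `A ⊑k B`: Duplicator has a winning strategy in the
single-buffer simulation game with buffer capacity `k` (`k = ⊤` is the unbounded
buffer). -/
def Sim1 {S : Type} (A B : BA S) (k : ℕ∞) : Prop :=
  ∃ dstrat : List ((S × A.Q) × Option B.Q) → (S × A.Q) → Option B.Q,
    ∀ sp dm, (∀ n, dm n = dstrat (List.ofFn fun i : Fin n => (sp i, dm i)) (sp n)) →
      (∀ n c, playCfg1 A B sp dm n = some c → A.trans c.1 (sp n).1 (sp n).2) →
      (∀ n, (playCfg1 A B sp dm n).isSome) ∧ Win1 A B k sp dm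

/-!
Let Spoiler play an accepting run `ρ` of `A` on `w` and let Duplicator answer with her winning
strategy. She consumes the letters of `w` in order, so in round `n`, after `j` moves of hers, the
buffer holds `w j, …, w (n - 1)`, and her states listed move by move form a run of `B` on `w`.
Since Spoiler's run is accepting, Duplicator must move infinitely often through accepting states,
so this run is accepting.
-/

noncomputable def unrollStrategy {α β : Type} (f : List (α × Option β) → α → Option β)
    (sp : ℕ → α) : ℕ → Option β
  | n => f (List.ofFn fun i : Fin n => (sp i, unrollStrategy f sp i)) (sp n)
  decreasing_by exact i.isLt

theorem unrollStrategy_eq {α β : Type} (f : List (α × Option β) → α → Option β)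
    (sp : ℕ → α) (n : ℕ) :
    unrollStrategy f sp n =
      f (List.ofFn fun i : Fin n => (sp i, unrollStrategy f sp i)) (sp n) := by
  rw [unrollStrategy]

section MoveRun

variable {β : Type} (p₀ : β) (dm : ℕ → Option β)

abbrev moveCount : ℕ → ℕ := Nat.count fun n => (dm n).isSome

/-- Duplicator's state after her first `k` moves; the default of `getD` only comes into play
when she makes at most `k` moves. -/
noncomputable def moveRun : ℕ → β
  | 0 => p₀
  | k + 1 => (dm (Nat.nth (fun n => (dm n).isSome) k)).getD p₀

theorem moveRun_moveCount_succ {n : ℕ} {p : β} (h : dm n = some p) :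
    moveRun p₀ dm (moveCount dm n + 1) = p := by
  rw [moveRun, moveCount, Nat.nth_count (p := fun n => (dm n).isSome) (by simp [h]), h,
    Option.getD_some]

theorem infinite_setOf_isSome_of_frequently {P : β → Prop}
    (h : ∀ n, ∃ m, n ≤ m ∧ ∃ p ∈ dm m, P p) : {n | (dm n).isSome}.Infinite :=
  Set.infinite_of_forall_exists_gt fun n => by
    obtain ⟨m, hm, p, hp, -⟩ := h (n + 1)
    exact ⟨m, by simp [Option.mem_def.1 hp], by omega⟩

theorem moveRun_succ_of_infinite {S : Type} {R : β → S → β → Prop} {w : ℕ → S}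
    (hinf : {n | (dm n).isSome}.Infinite)
    (hR : ∀ n p, dm n = some p → R (moveRun p₀ dm (moveCount dm n)) (w (moveCount dm n)) p)
    (k : ℕ) :
    R (moveRun p₀ dm k) (w k) (moveRun p₀ dm (k + 1)) := by
  obtain ⟨p, hp⟩ := Option.isSome_iff_exists.1 (Nat.nth_mem_of_infinite hinf k)
  have hk : moveCount dm (Nat.nth (fun n => (dm n).isSome) k) = k :=
    Nat.count_nth_of_infinite hinf k
  have hnext := moveRun_moveCount_succ p₀ dm hp
  rw [hk] at hnext
  rw [hnext, ← hk]
  exact hR _ p hp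

theorem frequently_moveRun {P : β → Prop} (h : ∀ n, ∃ m, n ≤ m ∧ ∃ p ∈ dm m, P p) (n : ℕ) :
    ∃ k, n ≤ k ∧ P (moveRun p₀ dm k) := by
  have hinf := infinite_setOf_isSome_of_frequently dm h
  obtain ⟨m, hm, p, hp, hPp⟩ := h (Nat.nth (fun i => (dm i).isSome) n)
  refine ⟨moveCount dm m + 1, ?_, ?_⟩
  · have hcount := Nat.count_monotone (fun i => (dm i).isSome) hm
    rw [Nat.count_nth_of_infinite hinf] at hcount
    exact hcount.trans (Nat.le_succ _)
  · rwa [moveRun_moveCount_succ p₀ dm (Option.mem_def.1 hp)]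

end MoveRun

theorem map_range'_append_singleton {α : Type} (w : ℕ → α) {j n : ℕ} (hjn : j ≤ n) :
    (List.range' j (n - j)).map w ++ [w n] = w j :: (List.range' (j + 1) (n - j)).map w := by
  obtain ⟨d, rfl⟩ := Nat.exists_eq_add_of_le hjn
  rw [Nat.add_sub_cancel_left, ← List.map_cons, ← List.range'_succ, List.range'_concat]
  simp

section Play

variable {S : Type} (A B : BA S)

theorem playCfg1_succ_eq_some {sp : ℕ → S × A.Q} {dm : ℕ → Option B.Q} {n : ℕ}
    {c : A.Q × List S × B.Q} :
    playCfg1 A B sp dm (n + 1) = some c ↔ ∃ c₀, playCfg1 A B sp dm n = some c₀ ∧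
      A.trans c₀.1 (sp n).1 (sp n).2 ∧ dupApply1 A B (midCfg1 c₀ (sp n)) (dm n) = some c := by
  rw [playCfg1]
  cases playCfg1 A B sp dm n <;> simp

theorem dupApply1_some_eq_some {q : A.Q} {b : S} {γ : List S} {p p' : B.Q}
    {c : A.Q × List S × B.Q} :
    dupApply1 A B (q, b :: γ, p) (some p') = some c ↔ B.trans p b p' ∧ c = (q, γ, p') := by
  simp only [dupApply1]
  split_ifs <;> simp [*, eq_comm]

def spoilerOfRun {Q : Type} (w : ℕ → S) (ρ : ℕ → Q) : ℕ → S × Q := fun n => (w n, ρ (n + 1))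

variable {A B} {w : ℕ → S} {ρ : ℕ → A.Q} {dm : ℕ → Option B.Q}

theorem playCfg1_spoilerOfRun_eq_some (hρ₀ : ρ 0 = A.init) {n : ℕ} {c : A.Q × List S × B.Q}
    (hc : playCfg1 A B (spoilerOfRun w ρ) dm n = some c) :
    c = (ρ n, (List.range' (moveCount dm n) (n - moveCount dm n)).map w,
      moveRun B.init dm (moveCount dm n)) := by
  induction n generalizing c with
  | zero =>
    simp only [playCfg1, Option.some.injEq] at hc
    simp [← hc, hρ₀, moveRun]
  | succ n ih =>
    obtain ⟨c₀, hc₀, -, hc⟩ := (playCfg1_succ_eq_some A B).1 hc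
    have hle : moveCount dm n ≤ n := Nat.count_le _
    rw [ih hc₀, midCfg1, spoilerOfRun, map_range'_append_singleton w hle] at hc
    rw [moveCount, Nat.count_succ]
    cases hdm : dm n with
    | none =>
      rw [hdm] at hc
      simp only [dupApply1, Option.some.injEq] at hc
      simp [← hc, Nat.sub_add_comm hle, List.range'_succ]
    | some p =>
      rw [hdm, dupApply1_some_eq_some] at hc
      simp [hc.2, moveRun_moveCount_succ B.init dm hdm]

theorem trans_of_playCfg1_spoilerOfRun (hρ₀ : ρ 0 = A.init) {n : ℕ} {p : B.Q}
    (hplay : (playCfg1 A B (spoilerOfRun w ρ) dm (n + 1)).isSome) (hdm : dm n = some p) :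
    B.trans (moveRun B.init dm (moveCount dm n)) (w (moveCount dm n)) p := by
  obtain ⟨c, hc⟩ := Option.isSome_iff_exists.1 hplay
  obtain ⟨c₀, hc₀, -, hc⟩ := (playCfg1_succ_eq_some A B).1 hc
  rw [playCfg1_spoilerOfRun_eq_some hρ₀ hc₀, midCfg1, spoilerOfRun,
    map_range'_append_singleton w (Nat.count_le _), hdm, dupApply1_some_eq_some] at hc
  exact hc.1

end Play

theorem Sim1.lang_subset {S : Type} {A B : BA S} {k : ℕ∞} (h : Sim1 A B k) :
    A.Lang ⊆ B.Lang := by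
  rintro w ⟨ρ, hρ₀, hρ, hρacc⟩
  obtain ⟨f, hf⟩ := h
  set dm := unrollStrategy f (spoilerOfRun w ρ)
  obtain ⟨hplay, -, hwin⟩ := hf _ dm (unrollStrategy_eq f _) fun n c hc => by
    rw [playCfg1_spoilerOfRun_eq_some hρ₀ hc]
    exact hρ n
  have hacc : ∀ n, ∃ m, n ≤ m ∧ ∃ p ∈ dm m, B.acc p := by
    rcases hwin with ⟨N, hN⟩ | ⟨-, hacc⟩
    · obtain ⟨m, hm, hρm⟩ := hρacc (N + 1)
      have hnotAcc := hN (m - 1) (by omega)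
      simp [spoilerOfRun, Nat.sub_add_cancel (show 1 ≤ m by omega), hρm] at hnotAcc
    · exact hacc
  refine ⟨moveRun B.init dm, rfl, ?_, frequently_moveRun B.init dm hacc⟩
  exact moveRun_succ_of_infinite B.init dm (infinite_setOf_isSome_of_frequently dm hacc)
    fun n p hp => trans_of_playCfg1_spoilerOfRun hρ₀ (hplay (n + 1)) hp

/-- Unbounded single-buffer simulation implies language inclusion:
if `A ⊑ω B` then `L(A) ⊆ L(B)`. -/
theorem sim1_unbounded_implies_lang_incl {S : Type} (A B : BA S)
    (h : Sim1 A B ⊤) : BA.Lang A ⊆ BA.Lang B :=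
  h.lang_subset
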